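/- arXiv:2110.15364 — 6 statements merged into one kernel-verified Lean document; each statement's English description precedes it below -/
import Mathlib

section
/- Let A be an n×n real symmetric matrix with rank(A) ≥ n−1, and let B = [[A, α],[αᵀ, b]] be an (n+1)×(n+1) real symmetric matrix (α ∈ ℝⁿ, b ∈ ℝ) such that det(A) and det(B) are not both zero. If det(A)·det(B) > 0 then the negative index of inertia satisfies q(B) = q(A). -/
/-! Since `A` is invertible, completing the square with `w = A⁻¹ α` shows that the quadratic form
of `B` is congruent to `(x, t) ↦ xᵀ A x + s t²` with `s = b - αᵀ A⁻¹ α = det B / det A > 0`.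
The negative index, read off by diagonalizing in an orthonormal eigenbasis, is Sylvester's
invariant `sigNeg` of the quadratic form; it is additive over orthogonal sums and vanishes on the
positive definite summand `s t²`. -/

open Matrix

/-- The negative index of inertia of a real symmetric matrix: the number of
negative eigenvalues counted with multiplicity. -/
noncomputable def negInertia {n : ℕ} (M : Matrix (Fin n) (Fin n) ℝ) : ℕ :=
  if h : M.IsHermitian then (Finset.univ.filter fun i => h.eigenvalues i < 0).card
  else 0

open QuadraticMap

namespace QuadraticForm

def weightedSumSquaresProdEquiv {R ι κ : Type*} [CommSemiring R] [Fintype ι] [Fintype κ]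
    (w : ι → R) (w' : κ → R) :
    ((weightedSumSquares R w).prod (weightedSumSquares R w')).IsometryEquiv
      (weightedSumSquares R (Sum.elim w w')) where
  toLinearEquiv := (LinearEquiv.sumArrowLequivProdArrow ι κ R R).symm
  map_app' := fun ⟨x, y⟩ => by simp [Fintype.sum_sum_type]

variable {K V W : Type*} [Field K] [LinearOrder K] [IsStrictOrderedRing K]
  [AddCommGroup V] [Module K V] [AddCommGroup W] [Module K W]

theorem sigNeg_eq_zero_of_posDef [FiniteDimensional K V] {Q : QuadraticForm K V} (hQ : Q.PosDef) :
    sigNeg Q = 0 := by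
  obtain ⟨U, hU, hneg⟩ := exists_finrank_eq_sigNeg_and_negDef Q
  rw [← hU, Submodule.finrank_eq_zero, Submodule.eq_bot_iff]
  intro x hx
  by_contra hx0
  have h₁ := hneg ⟨x, hx⟩ (by simpa using hx0)
  have h₂ := hQ x hx0
  simp only [restrict_apply, _root_.neg_apply] at h₁
  linarith

theorem sigNeg_prod [FiniteDimensional K V] [FiniteDimensional K W]
    (Q₁ : QuadraticForm K V) (Q₂ : QuadraticForm K W) :
    sigNeg (Q₁.prod Q₂) = sigNeg Q₁ + sigNeg Q₂ := by
  have : Invertible (2 : K) := invertibleOfNonzero two_ne_zero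
  obtain ⟨w₁, ⟨e₁⟩⟩ := Q₁.equivalent_weightedSumSquares
  obtain ⟨w₂, ⟨e₂⟩⟩ := Q₂.equivalent_weightedSumSquares
  rw [sigNeg_of_equiv_weightedSumSquares ⟨e₁⟩, sigNeg_of_equiv_weightedSumSquares ⟨e₂⟩,
    sigNeg_of_equiv_weightedSumSquares ⟨(e₁.prod e₂).trans (weightedSumSquaresProdEquiv w₁ w₂)⟩]
  simp only [Set.ncard_eq_toFinset_card', Set.toFinset_ofPred]
  rw [Finset.card_filter, Finset.card_filter, Finset.card_filter, Fintype.sum_sum_type]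
  rfl

end QuadraticForm

theorem Matrix.IsSymm.dotProduct_mulVec_comm {R m : Type*} [CommSemiring R] [Fintype m]
    {A : Matrix m m R} (hA : A.IsSymm) (x y : m → R) : x ⬝ᵥ A *ᵥ y = y ⬝ᵥ A *ᵥ x := by
  rw [dotProduct_mulVec, dotProduct_comm, ← mulVec_transpose, hA.eq]

namespace Matrix.IsHermitian

variable {ι : Type*} [Fintype ι] [DecidableEq ι] {M : Matrix ι ι ℝ}

theorem toQuadraticForm'_equivalent_weightedSumSquares (hM : M.IsHermitian) :
    M.toQuadraticForm'.Equivalent (weightedSumSquares ℝ hM.eigenvalues) := by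
  let v : Module.Basis ι ℝ (ι → ℝ) :=
    hM.eigenvectorBasis.toBasis.map (WithLp.linearEquiv 2 ℝ (ι → ℝ))
  have hform (i j : ι) :
      M.toLinearMap₂' ℝ (v i) (v j) = if i = j then hM.eigenvalues i else 0 := by
    have h := orthonormal_iff_ite.mp hM.eigenvectorBasis.orthonormal i j
    rw [EuclideanSpace.inner_eq_star_dotProduct, star_trivial, dotProduct_comm] at h
    rw [toLinearMap₂'_apply']
    change (hM.eigenvectorBasis i : ι → ℝ) ⬝ᵥ M *ᵥ hM.eigenvectorBasis j = _
    rw [mulVec_eigenvectorBasis, dotProduct_smul, h]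
    split_ifs with hij <;> simp [hij]
  have hsymm (x y : ι → ℝ) : M.toLinearMap₂' ℝ x y = M.toLinearMap₂' ℝ y x := by
    simpa only [toLinearMap₂'_apply'] using
      (isHermitian_iff_isSymm.mp hM).dotProduct_mulVec_comm x y
  have hrepr : M.toQuadraticForm'.basisRepr v = weightedSumSquares ℝ hM.eigenvalues := by
    rw [basisRepr_eq_of_iIsOrtho _ _ fun i j hij => ?_]
    · congr 1; funext i; simp [toQuadraticForm', hform]
    · rw [Function.onFun, toQuadraticForm', associated_left_inverse _ hsymm, hform, if_neg hij]
  exact ⟨hrepr ▸ M.toQuadraticForm'.isometryEquivBasisRepr v⟩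

end Matrix.IsHermitian

theorem negInertia_eq_sigNeg {n : ℕ} {M : Matrix (Fin n) (Fin n) ℝ} (hM : M.IsHermitian) :
    negInertia M = sigNeg M.toQuadraticForm' := by
  rw [QuadraticForm.sigNeg_of_equiv_weightedSumSquares
    hM.toQuadraticForm'_equivalent_weightedSumSquares, negInertia, dif_pos hM,
    ← Set.ncard_coe_finset]
  simp

namespace Matrix

section Bordered

variable {R : Type*} {n : ℕ}

/-- The bordered matrix `[[A, α], [αᵀ, b]]`. -/
def bordered (A : Matrix (Fin n) (Fin n) R) (α : Fin n → R) (b : R) :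
    Matrix (Fin (n + 1)) (Fin (n + 1)) R :=
  reindex finSumFinEquiv finSumFinEquiv
    (fromBlocks A (replicateCol (Fin 1) α) (replicateRow (Fin 1) α) (of fun _ _ => b))

section Entries

variable (A : Matrix (Fin n) (Fin n) R) (α : Fin n → R) (b : R)

@[simp] theorem bordered_castSucc_castSucc (i j : Fin n) :
    bordered A α b i.castSucc j.castSucc = A i j := by
  simp [bordered]

@[simp] theorem bordered_castSucc_last (i : Fin n) :
    bordered A α b i.castSucc (Fin.last n) = α i := by
  simp [bordered]

@[simp] theorem bordered_last_castSucc (j : Fin n) :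
    bordered A α b (Fin.last n) j.castSucc = α j := by
  simp [bordered]

@[simp] theorem bordered_last_last : bordered A α b (Fin.last n) (Fin.last n) = b := by
  simp [bordered]

theorem eq_bordered {B : Matrix (Fin (n + 1)) (Fin (n + 1)) R}
    (h₁ : ∀ i j : Fin n, B i.castSucc j.castSucc = A i j)
    (h₂ : ∀ i : Fin n, B i.castSucc (Fin.last n) = α i)
    (h₃ : ∀ j : Fin n, B (Fin.last n) j.castSucc = α j)
    (h₄ : B (Fin.last n) (Fin.last n) = b) :
    B = bordered A α b := by
  ext i j
  induction i using Fin.lastCases <;> induction j using Fin.lastCases <;> simp [*]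

end Entries

theorem isSymm_bordered {A : Matrix (Fin n) (Fin n) R} (hA : A.IsSymm) (α : Fin n → R) (b : R) :
    (bordered A α b).IsSymm :=
  (hA.fromBlocks (transpose_replicateCol _) (by ext; rfl)).submatrix _

variable [CommRing R]

theorem det_bordered (A : Matrix (Fin n) (Fin n) R) [Invertible A] (α : Fin n → R) (b : R) :
    (bordered A α b).det = A.det * (b - α ⬝ᵥ A⁻¹ *ᵥ α) := by
  rw [bordered, det_reindex_self, det_fromBlocks₁₁, det_fin_one, dotProduct_mulVec]
  simp [vecMul, dotProduct, Matrix.mul_apply]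

theorem dotProduct_bordered_mulVec_snoc (A : Matrix (Fin n) (Fin n) R) (α : Fin n → R) (b : R)
    (u : Fin n → R) (t : R) :
    (Fin.snoc u t : Fin (n + 1) → R) ⬝ᵥ bordered A α b *ᵥ Fin.snoc u t =
      u ⬝ᵥ A *ᵥ u + 2 * t * (α ⬝ᵥ u) + b * t ^ 2 := by
  have h : ∑ i, u i * (α i * t) = t * ∑ i, α i * u i := by
    rw [Finset.mul_sum]
    exact Finset.sum_congr rfl fun _ _ => by ring
  simp only [dotProduct, mulVec, Fin.sum_univ_castSucc, Fin.snoc_castSucc, Fin.snoc_last,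
    bordered_castSucc_castSucc, bordered_castSucc_last, bordered_last_castSucc,
    bordered_last_last, mul_add, Finset.sum_add_distrib, h]
  ring

def snocShear (w : Fin n → R) : ((Fin n → R) × R) ≃ₗ[R] (Fin (n + 1) → R) where
  toFun p := Fin.snoc (p.1 - p.2 • w) p.2
  invFun z := (Fin.init z + z (Fin.last n) • w, z (Fin.last n))
  map_add' p q := by
    ext i
    induction i using Fin.lastCases <;> simp
    ring
  map_smul' c p := by
    ext i
    induction i using Fin.lastCases <;> simp
    ring
  left_inv p := by simp [Fin.init_snoc]
  right_inv z := by
    ext i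
    induction i using Fin.lastCases <;> simp [Fin.init]

theorem snocShear_apply (w x : Fin n → R) (t : R) :
    snocShear w (x, t) = Fin.snoc (x - t • w) t :=
  rfl

variable {A : Matrix (Fin n) (Fin n) R} [Invertible A] (α : Fin n → R) (b : R)

theorem IsSymm.toQuadraticForm'_bordered_snocShear (hA : A.IsSymm) (x : Fin n → R) (t : R) :
    (bordered A α b).toQuadraticForm' (snocShear (A⁻¹ *ᵥ α) (x, t)) =
      A.toQuadraticForm' x + (b - α ⬝ᵥ A⁻¹ *ᵥ α) * t ^ 2 := by
  have hw : A *ᵥ (A⁻¹ *ᵥ α) = α := by simp [mulVec_mulVec]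
  simp only [toQuadraticForm', LinearMap.BilinMap.toQuadraticMap_apply, toLinearMap₂'_apply',
    snocShear_apply, dotProduct_bordered_mulVec_snoc]
  rw [mulVec_sub, mulVec_smul, hw]
  simp only [sub_dotProduct, dotProduct_sub, smul_dotProduct, dotProduct_smul, smul_eq_mul]
  rw [hA.dotProduct_mulVec_comm (A⁻¹ *ᵥ α) x, hw, dotProduct_comm x α, dotProduct_comm _ α]
  ring

theorem IsSymm.toQuadraticForm'_bordered_equivalent (hA : A.IsSymm) :
    (bordered A α b).toQuadraticForm'.Equivalent
      (A.toQuadraticForm'.prod ((b - α ⬝ᵥ A⁻¹ *ᵥ α) • QuadraticMap.sq)) :=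
  ⟨QuadraticMap.IsometryEquiv.symm
    { toLinearEquiv := snocShear (A⁻¹ *ᵥ α)
      map_app' := fun ⟨x, t⟩ => by
        simp [hA.toQuadraticForm'_bordered_snocShear, _root_.sq] }⟩

end Bordered

end Matrix

theorem stmt0_general {n : ℕ} (A : Matrix (Fin n) (Fin n) ℝ) (hA : A.IsSymm)
    (α : Fin n → ℝ) (b : ℝ) (B : Matrix (Fin (n + 1)) (Fin (n + 1)) ℝ)
    (hB1 : ∀ i j : Fin n, B i.castSucc j.castSucc = A i j)
    (hB2 : ∀ i : Fin n, B i.castSucc (Fin.last n) = α i)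
    (hB3 : ∀ i : Fin n, B (Fin.last n) i.castSucc = α i)
    (hB4 : B (Fin.last n) (Fin.last n) = b)
    (hpos : A.det * B.det > 0) :
    negInertia B = negInertia A := by
  obtain rfl := eq_bordered A α b hB1 hB2 hB3 hB4
  have hdetA : A.det ≠ 0 := left_ne_zero_of_mul hpos.ne'
  have := A.invertibleOfIsUnitDet (isUnit_iff_ne_zero.mpr hdetA)
  have hschur : 0 < b - α ⬝ᵥ A⁻¹ *ᵥ α := by
    rw [det_bordered, ← mul_assoc] at hpos
    exact pos_of_mul_pos_right hpos (mul_self_nonneg _)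
  have hpd : ((b - α ⬝ᵥ A⁻¹ *ᵥ α) • QuadraticMap.sq : QuadraticForm ℝ ℝ).PosDef :=
    fun t ht => by simpa using mul_pos hschur (mul_self_pos.mpr ht)
  rw [negInertia_eq_sigNeg (isHermitian_iff_isSymm.mpr (isSymm_bordered hA α b)),
    negInertia_eq_sigNeg (isHermitian_iff_isSymm.mpr hA),
    (hA.toQuadraticForm'_bordered_equivalent α b).sigNeg_eq, QuadraticForm.sigNeg_prod,
    QuadraticForm.sigNeg_eq_zero_of_posDef hpd, add_zero]

theorem stmt0 {n : ℕ} (A : Matrix (Fin n) (Fin n) ℝ) (hA : A.IsSymm)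
    (hrank : n - 1 ≤ A.rank)
    (α : Fin n → ℝ) (b : ℝ) (B : Matrix (Fin (n + 1)) (Fin (n + 1)) ℝ)
    (hB1 : ∀ i j : Fin n, B i.castSucc j.castSucc = A i j)
    (hB2 : ∀ i : Fin n, B i.castSucc (Fin.last n) = α i)
    (hB3 : ∀ i : Fin n, B (Fin.last n) i.castSucc = α i)
    (hB4 : B (Fin.last n) (Fin.last n) = b)
    (hdet : ¬(A.det = 0 ∧ B.det = 0))
    (hpos : A.det * B.det > 0) :
    negInertia B = negInertia A :=
  stmt0_general A hA α b B hB1 hB2 hB3 hB4 hpos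
end

section
/- Let A be an n×n real symmetric matrix with rank(A) ≥ n−1 and det(A) ≠ 0, and let B = [[A, α],[αᵀ, b]] with det(B) = 0. Then q(B) = q(A), where q denotes the negative index of inertia. -/
open Matrix

section Aux

variable {ι κ : Type*} [Fintype ι] [Fintype κ]

/-- There is a `k`-dimensional subspace on which the quadratic form of `M` is
negative definite. -/
def HasNegSub (M : Matrix ι ι ℝ) (k : ℕ) : Prop :=
  ∃ W : Submodule ℝ (ι → ℝ), Module.finrank ℝ W = k ∧
    ∀ x ∈ W, x ≠ 0 → x ⬝ᵥ M *ᵥ x < 0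

lemma hasNegSub_transfer {M : Matrix ι ι ℝ} {N : Matrix κ κ ℝ}
    (f : (ι → ℝ) →ₗ[ℝ] (κ → ℝ))
    (hf : ∀ x, x ⬝ᵥ M *ᵥ x = f x ⬝ᵥ N *ᵥ f x) {k : ℕ} :
    HasNegSub M k → HasNegSub N k := by
  rintro ⟨W, hWr, hWneg⟩
  have hinj : Function.Injective (f ∘ₗ W.subtype) := by
    rw [← LinearMap.ker_eq_bot]
    refine (Submodule.eq_bot_iff _).2 ?_
    rintro ⟨x, hx⟩ hker
    simp only [LinearMap.mem_ker, LinearMap.comp_apply, Submodule.subtype_apply] at hker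
    have hx0 : x = 0 := by
      by_contra hx0
      have hneg := hWneg x hx hx0
      rw [hf x, hker] at hneg
      simp at hneg
    exact Subtype.ext (by simp [hx0])
  refine ⟨W.map f, ?_, ?_⟩
  · have h1 := LinearMap.finrank_range_of_inj hinj
    rwa [LinearMap.range_comp, Submodule.range_subtype, hWr] at h1
  · rintro y hy hy0
    obtain ⟨x, hx, rfl⟩ := Submodule.mem_map.1 hy
    have hx0 : x ≠ 0 := by rintro rfl; simp at hy0
    rw [← hf x]
    exact hWneg x hx hx0

lemma quad_diagonal [DecidableEq ι] (d : ι → ℝ) (x : ι → ℝ) :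
    x ⬝ᵥ (Matrix.diagonal d) *ᵥ x = ∑ i, d i * (x i * x i) := by
  simp only [dotProduct, mulVec_diagonal]
  exact Finset.sum_congr rfl fun i _ => by ring

lemma hasNegSub_diagonal_le [DecidableEq ι] {d : ι → ℝ} {k : ℕ}
    (h : HasNegSub (Matrix.diagonal d) k) :
    k ≤ (Finset.univ.filter fun i => d i < 0).card := by
  classical
  obtain ⟨W, hWr, hWneg⟩ := h
  let f : (ι → ℝ) →ₗ[ℝ] ({i // d i < 0} → ℝ) :=
    LinearMap.funLeft ℝ ℝ Subtype.val
  have hinj : Function.Injective (f ∘ₗ W.subtype) := by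
    rw [← LinearMap.ker_eq_bot]
    refine (Submodule.eq_bot_iff _).2 ?_
    rintro ⟨x, hx⟩ hker
    simp only [LinearMap.mem_ker, LinearMap.comp_apply, Submodule.subtype_apply] at hker
    have hz : ∀ i : ι, d i < 0 → x i = 0 := by
      intro i hi
      have := congrFun hker ⟨i, hi⟩
      simpa [f, LinearMap.funLeft] using this
    have hx0 : x = 0 := by
      by_contra hx0
      have hneg := hWneg x hx hx0
      rw [quad_diagonal] at hneg
      have hnonneg : (0:ℝ) ≤ ∑ i, d i * (x i * x i) := by
        refine Finset.sum_nonneg fun i _ => ?_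
        by_cases hi : d i < 0
        · simp [hz i hi]
        · exact mul_nonneg (le_of_not_gt hi) (mul_self_nonneg _)
      linarith
    exact Subtype.ext (by simp [hx0])
  have h1 := LinearMap.finrank_le_finrank_of_injective hinj
  rw [hWr, Module.finrank_pi] at h1
  simpa [Fintype.card_subtype] using h1

lemma hasNegSub_diagonal_card [DecidableEq ι] (d : ι → ℝ) :
    HasNegSub (Matrix.diagonal d) ((Finset.univ.filter fun i => d i < 0).card) := by
  classical
  let g : ({i // d i < 0} → ℝ) →ₗ[ℝ] (ι → ℝ) :=
    { toFun := fun x i => if h : d i < 0 then x ⟨i, h⟩ else 0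
      map_add' := fun x y => by funext i; by_cases h : d i < 0 <;> simp [h]
      map_smul' := fun c x => by funext i; by_cases h : d i < 0 <;> simp [h] }
  have hginj : Function.Injective g := by
    intro x y hxy
    funext j
    have := congrFun hxy j.1
    simpa [g, j.2] using this
  refine ⟨LinearMap.range g, ?_, ?_⟩
  · rw [LinearMap.finrank_range_of_inj hginj, Module.finrank_pi, Fintype.card_subtype]
  · rintro y hy hy0
    obtain ⟨x, rfl⟩ := hy
    rw [quad_diagonal]
    have hzero : ∀ i : ι, ¬ d i < 0 → g x i = 0 := fun i hi => by simp [g, hi]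
    obtain ⟨i0, hi0⟩ : ∃ i, g x i ≠ 0 := by
      by_contra hc
      push_neg at hc
      exact hy0 (funext hc)
    have hdi0 : d i0 < 0 := by
      by_contra hc
      exact hi0 (hzero i0 hc)
    have : ∑ i, d i * (g x i * g x i) < ∑ i : ι, (0:ℝ) := by
      refine Finset.sum_lt_sum (fun i _ => ?_) ⟨i0, Finset.mem_univ _, ?_⟩
      · by_cases hi : d i < 0
        · exact mul_nonpos_of_nonpos_of_nonneg (le_of_lt hi) (mul_self_nonneg _)
        · simp [hzero i hi]
      · have : 0 < g x i0 * g x i0 := mul_self_pos.2 hi0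
        exact mul_neg_of_neg_of_pos hdi0 this
    simpa using this

/-- Transfer a quadratic form through the spectral theorem. -/
lemma quad_spectral {m : ℕ} {M : Matrix (Fin m) (Fin m) ℝ} (h : M.IsHermitian) :
    ∀ k, HasNegSub M k ↔ HasNegSub (Matrix.diagonal h.eigenvalues) k := by
  classical
  set U : Matrix (Fin m) (Fin m) ℝ := (h.eigenvectorUnitary : Matrix (Fin m) (Fin m) ℝ) with hU
  have spec : M = U * Matrix.diagonal h.eigenvalues * star U := by
    have := h.spectral_theorem
    rwa [RCLike.ofReal_real_eq_id, Function.id_comp] at this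
  have hUU : star U * U = 1 := by
    have := (Matrix.mem_unitaryGroup_iff').mp h.eigenvectorUnitary.2
    exact this
  have key : ∀ x z : Fin m → ℝ, x ⬝ᵥ (U *ᵥ z) = (star U *ᵥ x) ⬝ᵥ z := by
    intro x z
    rw [dotProduct_mulVec, ← Matrix.mulVec_transpose,
      ← Matrix.conjTranspose_eq_transpose_of_trivial, ← Matrix.star_eq_conjTranspose]
  intro k
  constructor
  · refine hasNegSub_transfer ((star U).mulVecLin) fun x => ?_
    conv_lhs => rw [spec]
    simp only [mulVecLin_apply]
    rw [← Matrix.mulVec_mulVec, ← Matrix.mulVec_mulVec, key]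
  · refine hasNegSub_transfer (U.mulVecLin) fun y => ?_
    conv_rhs => rw [spec]
    simp only [mulVecLin_apply]
    rw [← Matrix.mulVec_mulVec, ← Matrix.mulVec_mulVec, key,
      Matrix.mulVec_mulVec, hUU, Matrix.one_mulVec]

lemma negInertia_eq_card {m : ℕ} {M : Matrix (Fin m) (Fin m) ℝ} (h : M.IsHermitian) :
    negInertia M = (Finset.univ.filter fun i => h.eigenvalues i < 0).card := by
  rw [negInertia, dif_pos h]

lemma hasNegSub_negInertia {m : ℕ} {M : Matrix (Fin m) (Fin m) ℝ} (h : M.IsHermitian) :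
    HasNegSub M (negInertia M) := by
  rw [negInertia_eq_card h, quad_spectral h]
  exact hasNegSub_diagonal_card _

lemma le_negInertia_of_hasNegSub {m : ℕ} {M : Matrix (Fin m) (Fin m) ℝ}
    (h : M.IsHermitian) {k : ℕ} (hk : HasNegSub M k) : k ≤ negInertia M := by
  rw [negInertia_eq_card h]
  exact hasNegSub_diagonal_le ((quad_spectral h k).1 hk)

end Aux

theorem stmt2 {n : ℕ} (A : Matrix (Fin n) (Fin n) ℝ) (hA : A.IsSymm)
    (hrank : n - 1 ≤ A.rank)
    (α : Fin n → ℝ) (b : ℝ) (B : Matrix (Fin (n + 1)) (Fin (n + 1)) ℝ)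
    (hB1 : ∀ i j : Fin n, B i.castSucc j.castSucc = A i j)
    (hB2 : ∀ i : Fin n, B i.castSucc (Fin.last n) = α i)
    (hB3 : ∀ i : Fin n, B (Fin.last n) i.castSucc = α i)
    (hB4 : B (Fin.last n) (Fin.last n) = b)
    (hAdet : A.det ≠ 0)
    (hBdet : B.det = 0) :
    negInertia B = negInertia A := by
  classical
  have hAH : A.IsHermitian := by
    rw [Matrix.IsHermitian, Matrix.conjTranspose_eq_transpose_of_trivial]
    exact hA
  have hBH : B.IsHermitian := by
    rw [Matrix.IsHermitian, Matrix.conjTranspose_eq_transpose_of_trivial]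
    ext i j
    rw [Matrix.transpose_apply]
    refine Fin.lastCases ?_ ?_ i <;> [skip; intro i'] <;>
      refine Fin.lastCases ?_ ?_ j <;> try intro j'
    · rfl
    · rw [hB2, hB3]
    · rw [hB2, hB3]
    · rw [hB1, hB1, hA.apply]
  -- A is invertible
  have : Invertible A := A.invertibleOfIsUnitDet (isUnit_iff_ne_zero.2 hAdet)
  set β : Fin n → ℝ := A⁻¹ *ᵥ α with hβ
  have hAβ : A *ᵥ β = α := by
    rw [hβ, Matrix.mulVec_mulVec, Matrix.mul_nonsing_inv _ (isUnit_iff_ne_zero.2 hAdet),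
      Matrix.one_mulVec]
  have hβA : β ᵥ* A = α := by
    rw [← Matrix.mulVec_transpose, hA, hAβ]
  -- determinant computation: b = α ⬝ᵥ β
  have hb : b = α ⬝ᵥ β := by
    set e : Fin n ⊕ Fin 1 ≃ Fin (n + 1) := finSumFinEquiv
    have hel : ∀ i : Fin n, e (Sum.inl i) = i.castSucc := fun i => rfl
    have her : ∀ j : Fin 1, e (Sum.inr j) = Fin.last n := by
      intro j
      have : j = 0 := Subsingleton.elim _ _
      subst this
      ext
      simp [e, Fin.last]
    have hBsub : B.submatrix e e =
        Matrix.fromBlocks A (Matrix.of fun i (_ : Fin 1) => α i)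
          (Matrix.of fun (_ : Fin 1) j => α j) (Matrix.of fun _ _ => b) := by
      ext i j
      cases i with
      | inl i => cases j with
        | inl j => simp [hel, hB1]
        | inr j => simp [hel, her, hB2]
      | inr i => cases j with
        | inl j => simp [hel, her, hB3]
        | inr j => simp [her, hB4]
    have hdet : B.det = A.det * (b - α ⬝ᵥ β) := by
      rw [← Matrix.det_submatrix_equiv_self e, hBsub, Matrix.det_fromBlocks₁₁]
      congr 1
      rw [Matrix.det_fin_one]
      simp only [Matrix.sub_apply, Matrix.of_apply, Matrix.mul_apply]
      rw [invOf_eq_nonsing_inv]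
      have h2 : α ⬝ᵥ A⁻¹ *ᵥ α = ∑ j, (∑ k, α k * A⁻¹ k j) * α j := by
        rw [dotProduct_mulVec]
        rfl
      rw [← h2]
    rw [hdet] at hBdet
    rcases mul_eq_zero.1 hBdet with h | h
    · exact absurd h hAdet
    · linarith [sub_eq_zero.1 (by linarith : b - α ⬝ᵥ β = 0)]
  -- the two transfer maps
  let f : (Fin (n + 1) → ℝ) →ₗ[ℝ] (Fin n → ℝ) :=
    { toFun := fun x => (fun i => x i.castSucc) + x (Fin.last n) • β
      map_add' := fun x y => by funext i; simp [Pi.add_apply]; ring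
      map_smul' := fun c x => by funext i; simp [Pi.smul_apply]; ring }
  let g : (Fin n → ℝ) →ₗ[ℝ] (Fin (n + 1) → ℝ) :=
    { toFun := fun u => Fin.snoc u 0
      map_add' := fun u v => by
        funext i
        refine Fin.lastCases ?_ ?_ i <;> simp [Fin.snoc_castSucc]
      map_smul' := fun c u => by
        funext i
        refine Fin.lastCases ?_ ?_ i <;> simp [Fin.snoc_castSucc] }
  -- quadratic form expansion of B
  have expand : ∀ x : Fin (n + 1) → ℝ,
      x ⬝ᵥ B *ᵥ x = (fun i => x i.castSucc) ⬝ᵥ A *ᵥ (fun i => x i.castSucc)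
        + x (Fin.last n) * (α ⬝ᵥ fun i => x i.castSucc)
        + ((fun i => x i.castSucc) ⬝ᵥ α) * x (Fin.last n)
        + b * (x (Fin.last n) * x (Fin.last n)) := by
    intro x
    simp only [dotProduct, mulVec, dotProduct, Fin.sum_univ_castSucc, hB1, hB2, hB3, hB4,
      Finset.sum_add_distrib, Finset.mul_sum, Finset.sum_mul, mul_add, add_mul]
    ring
  have hβu : ∀ u : Fin n → ℝ, β ⬝ᵥ A *ᵥ u = α ⬝ᵥ u := fun u => by
    rw [dotProduct_mulVec, hβA]
  have hf : ∀ x : Fin (n + 1) → ℝ, x ⬝ᵥ B *ᵥ x = f x ⬝ᵥ A *ᵥ f x := by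
    intro x
    rw [expand x]
    show _ = ((fun i => x i.castSucc) + x (Fin.last n) • β) ⬝ᵥ
      A *ᵥ ((fun i => x i.castSucc) + x (Fin.last n) • β)
    simp only [Matrix.mulVec_add, Matrix.mulVec_smul, hAβ, dotProduct_add, add_dotProduct,
      smul_dotProduct, dotProduct_smul, smul_eq_mul, hβu, dotProduct_comm β α]
    rw [← hb]
    ring
  have hg : ∀ u : Fin n → ℝ, u ⬝ᵥ A *ᵥ u = g u ⬝ᵥ B *ᵥ g u := by
    intro u
    rw [expand (g u)]
    have h1 : (fun i => g u i.castSucc) = u := by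
      funext i; simp [g, Fin.snoc_castSucc]
    have h2 : g u (Fin.last n) = 0 := by simp [g]
    rw [h1, h2]
    ring
  exact le_antisymm
    (le_negInertia_of_hasNegSub hAH (hasNegSub_transfer f hf (hasNegSub_negInertia hBH)))
    (le_negInertia_of_hasNegSub hBH (hasNegSub_transfer g hg (hasNegSub_negInertia hAH)))
end

section
/- Every real symmetric matrix A admits a normal principal minor sequence, i.e., a nested sequence of principal minors D₁, …, Dₙ (with index sets I₁ ⊂ … ⊂ Iₙ, #I_i = i) such that D_r ≠ 0 where r = rank(A), and no two consecutive minors D_i, D_{i+1} with i ≤ r−1 are both zero. -/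
open Matrix

/-- The principal minor of `A` with rows and columns indexed by the finset `s`. -/
noncomputable def principalMinor {n : ℕ} (A : Matrix (Fin n) (Fin n) ℝ)
    (s : Finset (Fin n)) : ℝ :=
  Matrix.det (A.submatrix
    (fun k : Fin s.card => ((s.orderIsoOfFin rfl k : Fin n)))
    (fun k : Fin s.card => ((s.orderIsoOfFin rfl k : Fin n))))

/-!
A symmetric matrix `A` of rank `r` has a nonsingular principal `r × r` submatrix: if the rows
indexed by `s` form a basis of the row space, then the columns indexed by `s` do too (by
symmetry), and restricting the spanning rows to these columns does not lose rank.

Starting from such an `s`, remove indices one at a time while keeping `rank A_s + 1 ≥ #s`.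
If `A_s` is nonsingular, any index may go, since deleting a row and a column lowers the rank by
at most two; otherwise `rank A_s = #s - 1` and `A_s` contains a nonsingular principal submatrix
of that size, which we pass to. Either way one of the two minors of a deletion step is nonzero.
Above `r` the chain is completed arbitrarily.
-/

open Submodule Set Module

namespace Matrix

section Rank

variable {K : Type*} [Field K] {m n κ : Type*} [Fintype m] [Fintype n] [Fintype κ]

theorem rank_le_rank_submatrix_row_add_one (B : Matrix m n K) (r : κ → m) (a : m)
    (hr : ∀ i, i ≠ a → i ∈ range r) : B.rank ≤ (B.submatrix r id).rank + 1 := by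
  have hsub : span K (range B.row) ≤
      span K (range (B.submatrix r id).row) ⊔ span K {B.row a} := by
    rw [← span_union]
    refine span_mono ?_
    rintro - ⟨i, rfl⟩
    by_cases hi : i = a
    · exact Or.inr (hi ▸ rfl)
    · obtain ⟨k, rfl⟩ := hr i hi
      exact Or.inl ⟨k, rfl⟩
  rw [rank_eq_finrank_span_row, rank_eq_finrank_span_row]
  calc _ ≤ _ := finrank_mono hsub
    _ ≤ _ := finrank_add_le_finrank_add_finrank _ _
    _ ≤ _ := by gcongr; simpa using finrank_span_le_card ({B.row a} : Set (n → K))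

theorem rank_le_rank_submatrix_col_add_one (B : Matrix m n K) (c : κ → n) (b : n)
    (hc : ∀ j, j ≠ b → j ∈ range c) : B.rank ≤ (B.submatrix id c).rank + 1 := by
  simpa [rank_transpose, ← transpose_submatrix] using
    rank_le_rank_submatrix_row_add_one Bᵀ c b hc

theorem rank_le_rank_submatrix_self_add_two (B : Matrix n n K) (h : κ → n) (a : n)
    (ha : ∀ i, i ≠ a → i ∈ range h) : B.rank ≤ (B.submatrix h h).rank + 2 :=
  calc B.rank ≤ (B.submatrix h id).rank + 1 := rank_le_rank_submatrix_row_add_one B h a ha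
    _ ≤ ((B.submatrix h id).submatrix id h).rank + 1 + 1 := by
      gcongr; exact rank_le_rank_submatrix_col_add_one _ h a ha
    _ = (B.submatrix h h).rank + 2 := by simp [submatrix_submatrix]

theorem IsSymm.rank_submatrix_self_of_span_row_eq {B : Matrix n n K} (hB : B.IsSymm)
    (h : κ → n) (hspan : span K (range (B.row ∘ h)) = span K (range B.row)) :
    (B.submatrix h h).rank = B.rank := by
  let π : (n → K) →ₗ[K] κ → K := LinearMap.funLeft K K h
  have hcols : (B.submatrix id h).rank = (B.submatrix h id).rank := by
    rw [← rank_transpose, transpose_submatrix, hB.eq]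
  calc (B.submatrix h h).rank = finrank K (span K (range (π ∘ B.row ∘ h))) :=
        rank_eq_finrank_span_row _
    _ = finrank K (span K (range (π ∘ B.row))) := by
        rw [range_comp π, range_comp π, ← map_span, ← map_span, hspan]
    _ = (B.submatrix id h).rank := (rank_eq_finrank_span_row _).symm
    _ = finrank K (span K (range (B.row ∘ h))) := hcols.trans (rank_eq_finrank_span_row _)
    _ = B.rank := by rw [hspan, rank_eq_finrank_span_row]

theorem isUnit_of_rank_eq_card [DecidableEq n] {M : Matrix n n K}
    (h : M.rank = Fintype.card n) : IsUnit M :=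
  linearIndependent_rows_iff_isUnit.1 <|
    linearIndependent_iff_card_eq_finrank_span.2 (h ▸ M.rank_eq_finrank_span_row)

end Rank

def principalSubmatrix {ι α : Type*} (A : Matrix ι ι α) (s : Finset ι) : Matrix s s α :=
  A.submatrix (↑) (↑)

theorem IsSymm.principalSubmatrix {ι α : Type*} {A : Matrix ι ι α} (hA : A.IsSymm)
    (s : Finset ι) : (A.principalSubmatrix s).IsSymm :=
  hA.submatrix _

theorem rank_principalSubmatrix_univ {K ι : Type*} [Field K] [Fintype ι] (A : Matrix ι ι K) :
    (A.principalSubmatrix Finset.univ).rank = A.rank :=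
  rank_submatrix A (Equiv.subtypeUnivEquiv Finset.mem_univ) (Equiv.subtypeUnivEquiv Finset.mem_univ)

section Principal

variable {K ι : Type*} [Field K] [DecidableEq ι]

theorem rank_principalSubmatrix_of_det_ne_zero {A : Matrix ι ι K} {s : Finset ι}
    (h : (A.principalSubmatrix s).det ≠ 0) : (A.principalSubmatrix s).rank = s.card := by
  rw [rank_of_isUnit _ ((isUnit_iff_isUnit_det _).2 h.isUnit), Fintype.card_coe]

theorem rank_principalSubmatrix_le_erase_add_two (A : Matrix ι ι K) {s : Finset ι} {a : ι}
    (ha : a ∈ s) :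
    (A.principalSubmatrix s).rank ≤ (A.principalSubmatrix (s.erase a)).rank + 2 :=
  rank_le_rank_submatrix_self_add_two (A.principalSubmatrix s)
    (fun i : s.erase a => ⟨i, Finset.mem_of_mem_erase i.2⟩) ⟨a, ha⟩
    fun (i : s) hi => ⟨⟨i, Finset.mem_erase.2 ⟨fun h => hi (Subtype.ext h), i.2⟩⟩, rfl⟩

theorem IsSymm.exists_subset_card_eq_rank_det_ne_zero {A : Matrix ι ι K} (hA : A.IsSymm)
    (s : Finset ι) : ∃ t ⊆ s, t.card = (A.principalSubmatrix s).rank ∧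
      (A.principalSubmatrix t).det ≠ 0 := by
  let v : ι → s → K := fun i j => A i j
  obtain ⟨b, hbs, -, hspan, hli⟩ :=
    exists_linearIndepOn_extension (linearIndepOn_empty K v) (empty_subset (s : Set ι))
  lift b to Finset ι using s.finite_toSet.subset hbs
  have hts : b ⊆ s := by exact_mod_cast hbs
  set B := A.principalSubmatrix s
  let h : b → s := fun i => ⟨i, hts i.2⟩
  have hrow_span : span K (range (B.row ∘ h)) = span K (range B.row) := by
    refine le_antisymm (span_mono (range_comp_subset_range _ _)) (span_le.2 ?_)
    rintro - ⟨i, rfl⟩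
    have hi := hspan ⟨i, i.2, rfl⟩
    rw [image_eq_range] at hi
    exact hi
  have hrank : (B.submatrix h id).rank = B.rank := by
    rw [rank_eq_finrank_span_row, rank_eq_finrank_span_row, ← hrow_span]
    rfl
  have hcard : b.card = B.rank := by
    have hli' : (B.submatrix h id).rank = Fintype.card b :=
      LinearIndependent.rank_matrix hli.linearIndependent
    rw [← hrank, hli', Fintype.card_coe]
  refine ⟨b, hts, hcard, ?_⟩
  have hsq : (A.principalSubmatrix b).rank = Fintype.card b := by
    rw [Fintype.card_coe, hcard]
    exact (hA.principalSubmatrix s).rank_submatrix_self_of_span_row_eq h hrow_span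
  exact ((isUnit_iff_isUnit_det _).1 (isUnit_of_rank_eq_card hsq)).ne_zero

theorem IsSymm.exists_erase_of_card_le_rank_add_one {A : Matrix ι ι K} (hA : A.IsSymm) {s : Finset ι}
    (hs : s.card ≤ (A.principalSubmatrix s).rank + 1) (hne : s.Nonempty) :
    ∃ a ∈ s, (s.erase a).card ≤ (A.principalSubmatrix (s.erase a)).rank + 1 ∧
      ((A.principalSubmatrix s).det ≠ 0 ∨ (A.principalSubmatrix (s.erase a)).det ≠ 0) := by
  obtain ⟨t, hts, htcard, hdet⟩ := hA.exists_subset_card_eq_rank_det_ne_zero s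
  rcases hts.eq_or_ssubset with rfl | hlt
  · obtain ⟨a, ha⟩ := hne
    have hdrop := A.rank_principalSubmatrix_le_erase_add_two ha
    refine ⟨a, ha, ?_, Or.inl hdet⟩
    rw [Finset.card_erase_of_mem ha]
    omega
  · obtain ⟨a, has, hat⟩ := Finset.exists_of_ssubset hlt
    have hcard_lt := Finset.card_lt_card hlt
    have hte : t = s.erase a := Finset.eq_of_subset_of_card_le
      (fun x hx => Finset.mem_erase.2 ⟨fun h => hat (h ▸ hx), hts hx⟩)
      (by rw [Finset.card_erase_of_mem has]; omega)
    subst hte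
    exact ⟨a, has, (rank_principalSubmatrix_of_det_ne_zero hdet).ge.trans (by omega), Or.inr hdet⟩

theorem IsSymm.exists_list_no_consecutive_zero_minors {A : Matrix ι ι K} (hA : A.IsSymm)
    (s : Finset ι) (hs : s.card ≤ (A.principalSubmatrix s).rank + 1) :
    ∃ l : List ι, l.Nodup ∧ l.toFinset = s ∧ ∀ i, 1 ≤ i → i + 1 ≤ s.card →
      (A.principalSubmatrix (l.take i).toFinset).det ≠ 0 ∨
        (A.principalSubmatrix (l.take (i + 1)).toFinset).det ≠ 0 := by
  induction s using Finset.strongInduction with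
  | H s ih =>
  rcases s.eq_empty_or_nonempty with rfl | hne
  · exact ⟨[], List.nodup_nil, rfl, fun i _ hi => by simp at hi⟩
  obtain ⟨a, ha, hs', hpair⟩ := hA.exists_erase_of_card_le_rank_add_one hs hne
  obtain ⟨l, hl, hls, hnormal⟩ := ih _ (Finset.erase_ssubset ha) hs'
  have hal : a ∉ l := by simp [← List.mem_toFinset, hls]
  have hlen : l.length = (s.erase a).card := by rw [← List.toFinset_card_of_nodup hl, hls]
  have hls' : (l ++ [a]).toFinset = s := by simp [hls, Finset.insert_erase ha]
  refine ⟨l ++ [a], List.nodup_append.2 ⟨hl, List.nodup_singleton a, by grind⟩, hls',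
    fun i hi1 hi2 => ?_⟩
  rcases Nat.lt_or_ge l.length (i + 1) with hlt | hle
  · have hi : i = l.length := by have := Finset.card_erase_add_one ha; omega
    subst hi
    rw [List.take_left' rfl, List.take_of_length_le (by simp), hls, hls']
    exact hpair.symm
  · rw [List.take_append_of_le_length (by omega), List.take_append_of_le_length hle]
    exact hnormal i hi1 (hlen ▸ hle)

end Principal

end Matrix

namespace List.Nodup

variable {α : Type*} [DecidableEq α] {l : List α}

theorem card_toFinset_take (hl : l.Nodup) (i : ℕ) :
    (l.take i).toFinset.card = min i l.length := by
  rw [toFinset_card_of_nodup (hl.sublist (l.take_sublist i)), length_take]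

theorem toFinset_take_ssubset_succ (hl : l.Nodup) {i : ℕ} (hi : i < l.length) :
    (l.take i).toFinset ⊂ (l.take (i + 1)).toFinset := by
  refine Finset.ssubset_iff_subset_ne.2 ⟨fun x hx => ?_, fun h => ?_⟩
  · exact mem_toFinset.2 (take_subset_take_left l i.le_succ (mem_toFinset.1 hx))
  · have hcard := congrArg Finset.card h
    rw [hl.card_toFinset_take, hl.card_toFinset_take] at hcard
    omega

end List.Nodup

theorem principalMinor_eq_det {n : ℕ} (A : Matrix (Fin n) (Fin n) ℝ) (s : Finset (Fin n)) :
    principalMinor A s = (A.principalSubmatrix s).det :=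
  det_submatrix_equiv_self (s.orderIsoOfFin rfl).toEquiv (A.principalSubmatrix s)

/-- Every real symmetric matrix admits a normal principal minor sequence. -/
theorem stmt7 {n : ℕ} (A : Matrix (Fin n) (Fin n) ℝ) (hA : A.IsSymm) :
    ∃ I : ℕ → Finset (Fin n),
      (∀ i, i ≤ n → (I i).card = i) ∧
      (∀ i, i < n → I i ⊂ I (i + 1)) ∧
      I n = Finset.univ ∧
      principalMinor A (I A.rank) ≠ 0 ∧
      (∀ i, 1 ≤ i → i + 1 ≤ A.rank →
        ¬(principalMinor A (I i) = 0 ∧ principalMinor A (I (i + 1)) = 0)) := by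
  obtain ⟨K, -, hKcard, hKdet⟩ := hA.exists_subset_card_eq_rank_det_ne_zero Finset.univ
  rw [rank_principalSubmatrix_univ] at hKcard
  obtain ⟨l₁, hl₁, hl₁K, hnormal⟩ := hA.exists_list_no_consecutive_zero_minors K
    (by rw [rank_principalSubmatrix_of_det_ne_zero hKdet]; omega)
  set l := l₁ ++ Kᶜ.toList
  have hl : l.Nodup := List.nodup_append.2 ⟨hl₁, Kᶜ.nodup_toList, fun a ha b hb hab =>
    Finset.mem_compl.1 (Finset.mem_toList.1 hb) (hab ▸ hl₁K ▸ List.mem_toFinset.2 ha)⟩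
  have huniv : l.toFinset = Finset.univ := by simp [l, hl₁K]
  have hlen : l.length = n := by
    rw [← List.toFinset_card_of_nodup hl, huniv, Finset.card_univ, Fintype.card_fin]
  have hlen₁ : l₁.length = A.rank := by rw [← List.toFinset_card_of_nodup hl₁, hl₁K, hKcard]
  refine ⟨fun i => (l.take i).toFinset, fun i hi => ?_, fun i hi => ?_, ?_, ?_, ?_⟩ <;>
    beta_reduce
  · rw [hl.card_toFinset_take, hlen, min_eq_left hi]
  · exact hl.toFinset_take_ssubset_succ (hlen.symm ▸ hi)
  · rw [List.take_of_length_le hlen.le, huniv]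
  · rw [principalMinor_eq_det, ← hlen₁, List.take_left' rfl, hl₁K]
    exact hKdet
  · intro i hi1 hi2
    rw [principalMinor_eq_det, principalMinor_eq_det, not_and_or,
      List.take_append_of_le_length (by omega), List.take_append_of_le_length (by omega)]
    exact hnormal i hi1 (hKcard ▸ hi2)
end

section
/- Let f₀, f₁, …, f_m be the Sturm chain of (f, g) with quotients d₁, …, d_m, and let S_{f,g}(x) be the m×m symmetric tridiagonal Sturm matrix with diagonal entries d₁(x), …, d_m(x) and off-diagonal entries equal to 1. Then for 1 ≤ i ≤ m, the trailing principal minor D_i(x) = det(S_{f,g}(x)_{{m−i+1,…,m}}) equals the refined Sturm chain element f̃_{m−i}(x) = f_{m−i}(x)/f_m(x) as polynomials. -/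
open Polynomial Matrix

set_option linter.unreachableTactic false
set_option linter.unusedTactic false

def triM (n : ℕ) (a : ℕ → ℝ) : Matrix (Fin n) (Fin n) ℝ :=
  Matrix.of fun i j =>
    if (i : ℕ) = (j : ℕ) then a ((i : ℕ) + 1)
    else if (i : ℕ) + 1 = (j : ℕ) ∨ (j : ℕ) + 1 = (i : ℕ) then 1 else 0

def cont : ℕ → (ℕ → ℝ) → ℝ
  | 0, _ => 1
  | 1, a => a 1
  | (n+2), a => a 1 * cont (n+1) (fun j => a (j+1)) - cont n (fun j => a (j+2))

lemma sub1 (n : ℕ) (a : ℕ → ℝ) :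
    (triM (n+2) a).submatrix Fin.succ ((0 : Fin (n+2)).succAbove) = triM (n+1) (fun j => a (j+1)) := by
  ext i j
  simp only [triM, submatrix_apply, of_apply, Fin.zero_succAbove, Fin.val_succ]
  split_ifs <;> first | rfl | omega | simp_all

lemma sub2 (n : ℕ) (a : ℕ → ℝ) :
    ((triM (n+2) a).submatrix Fin.succ (Fin.succ 0 : Fin (n+2)).succAbove).det
      = (triM n (fun j => a (j+2))).det := by
  set N := (triM (n+2) a).submatrix Fin.succ (Fin.succ 0 : Fin (n+2)).succAbove with hN
  have hA : ∀ i : Fin (n+1), N i 0 = if (i : ℕ) = 0 then 1 else 0 := by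
    intro i
    have h1 : ((Fin.succ 0 : Fin (n+2)).succAbove 0 : ℕ) = 0 := rfl
    simp only [hN, triM, submatrix_apply, of_apply, h1, Fin.val_succ]
    split_ifs <;> first | rfl | omega | simp_all
  rw [Matrix.det_succ_column_zero, Fin.sum_univ_succ]
  have hz : ∀ i : Fin n, (-1 : ℝ) ^ ((i.succ : Fin (n+1)) : ℕ) * N i.succ 0 *
      (N.submatrix i.succ.succAbove Fin.succ).det = 0 := by
    intro i
    rw [hA]
    simp
  rw [Finset.sum_congr rfl (fun i _ => hz i), hA]
  simp only [Finset.sum_const_zero, add_zero, Fin.val_zero, pow_zero, one_mul, mul_one, if_true]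
  congr 1
  ext i j
  have h2 : ((Fin.succ 0 : Fin (n+2)).succAbove (Fin.succ j) : ℕ) = (j : ℕ) + 2 := by
    rw [Fin.succ_succAbove_succ, Fin.zero_succAbove]
    simp
  simp only [hN, triM, submatrix_apply, of_apply, Fin.zero_succAbove, Fin.val_succ, h2]
  split_ifs <;> first | rfl | omega | simp_all

lemma det_triM : ∀ (n : ℕ) (a : ℕ → ℝ), (triM n a).det = cont n a := by
  intro n
  induction n using Nat.strong_induction_on with
  | _ n ih =>
    match n with
    | 0 => intro a; simp [cont, Matrix.det_fin_zero]
    | 1 => intro a; simp [cont, Matrix.det_fin_one, triM]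
    | (n+2) =>
      intro a
      rw [Matrix.det_succ_row_zero, Fin.sum_univ_succ, Fin.sum_univ_succ]
      have hz : ∀ i : Fin n,
          (-1 : ℝ) ^ ((i.succ.succ : Fin (n+2)) : ℕ) * triM (n+2) a 0 i.succ.succ *
            ((triM (n+2) a).submatrix Fin.succ i.succ.succ.succAbove).det = 0 := by
        intro i
        have : triM (n+2) a 0 i.succ.succ = 0 := by
          simp only [triM, of_apply, Fin.val_zero, Fin.val_succ]
          split_ifs <;> first | rfl | omega | simp_all
        rw [this]; ring
      rw [Finset.sum_congr rfl (fun i _ => hz i)]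
      have e0 : triM (n+2) a 0 0 = a 1 := rfl
      have e1 : triM (n+2) a 0 (Fin.succ 0) = 1 := rfl
      rw [e0, e1, sub1, sub2, ih (n+1) (by omega), ih n (by omega)]
      simp [cont]
      ring

/-- The Sturm matrix: the `m × m` symmetric tridiagonal matrix with diagonal
entries `d 1 x, …, d m x` and off-diagonal entries `1`. -/
noncomputable def sturmMatrix (m : ℕ) (d : ℕ → Polynomial ℝ) (x : ℝ) :
    Matrix (Fin m) (Fin m) ℝ :=
  Matrix.of fun i j =>
    if (i : ℕ) = (j : ℕ) then (d ((i : ℕ) + 1)).eval x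
    else if (i : ℕ) + 1 = (j : ℕ) ∨ (j : ℕ) + 1 = (i : ℕ) then 1 else 0

theorem stmt10 (f g : Polynomial ℝ)
    (hf : 0 < f.natDegree) (hg : 0 < g.natDegree)
    (m : ℕ) (hm : 1 ≤ m)
    (F d : ℕ → Polynomial ℝ)
    (hF0 : F 0 = f) (hF1 : F 1 = g)
    (hrec : ∀ i, 1 ≤ i → i < m → F (i - 1) = d i * F i - F (i + 1))
    (hdeg : ∀ i, 1 ≤ i → i < m → (F (i + 1)).degree < (F i).degree)
    (hlast : F (m - 1) = d m * F m)
    (hFm : F m ≠ 0) :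
    ∀ i (hi1 : 1 ≤ i) (hi2 : i ≤ m) (x : ℝ),
      Matrix.det ((sturmMatrix m d x).submatrix
          (fun k : Fin i => (⟨m - i + (k : ℕ), by have := k.isLt; omega⟩ : Fin m))
          (fun k : Fin i => (⟨m - i + (k : ℕ), by have := k.isLt; omega⟩ : Fin m)))
        = (F (m - i) / F m).eval x := by
  -- divisibility
  have hdvd : ∀ k, k ≤ m → F m ∣ F (m - k) := by
    intro k
    induction k using Nat.strong_induction_on with
    | _ k ih =>
      match k with
      | 0 => intro _; simpa using dvd_refl (F m)
      | 1 => intro _; rw [hlast]; exact Dvd.intro_left _ rfl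
      | (k+2) =>
        intro hk
        have h1 : (1:ℕ) ≤ m - (k+1) := by omega
        have h2 : m - (k+1) < m := by omega
        have := hrec (m - (k+1)) h1 h2
        have e1 : m - (k+1) - 1 = m - (k+2) := by omega
        have e2 : m - (k+1) + 1 = m - k := by omega
        rw [e1, e2] at this
        rw [this]
        exact dvd_sub (Dvd.dvd.mul_left (ih (k+1) (by omega) (by omega)) _)
          (ih k (by omega) (by omega))
  set G : ℕ → Polynomial ℝ := fun j => F j / F m with hGdef
  have hG : ∀ j, j ≤ m → F m * G j = F j := by
    intro j hj
    have := hdvd (m - j) (by omega)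
    have e : m - (m - j) = j := by omega
    rw [e] at this
    exact EuclideanDomain.mul_div_cancel' hFm this
  have hGm : G m = 1 := EuclideanDomain.div_self hFm
  have hGm1 : G (m-1) = d m := by
    simp only [hGdef, hlast]
    exact mul_div_cancel_right₀ _ hFm
  have hGrec : ∀ i, 1 ≤ i → i < m → G (i-1) = d i * G i - G (i+1) := by
    intro i h1 h2
    apply mul_left_cancel₀ hFm
    rw [hG _ (by omega), mul_sub, ← mul_assoc, mul_comm (F m) (d i), mul_assoc,
      hG _ (by omega), hG _ (by omega)]
    exact hrec i h1 h2
  -- main claim via cont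
  have main : ∀ i, 1 ≤ i → i ≤ m → ∀ x : ℝ,
      cont i (fun j => (d (m - i + j)).eval x) = (G (m - i)).eval x := by
    intro i
    induction i using Nat.strong_induction_on with
    | _ i ih =>
      match i with
      | 0 => intro h; omega
      | 1 =>
        intro _ h2 x
        have e : m - 1 + 1 = m := by omega
        simp only [cont, e]
        rw [hGm1]
      | 2 =>
        intro _ h2 x
        have e1 : m - 2 + 1 = m - 1 := by omega
        have e2 : m - 2 + 2 = m := by omega
        have hr := hGrec (m-1) (by omega) (by omega)
        have e3 : m - 1 - 1 = m - 2 := by omega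
        have e4 : m - 1 + 1 = m := by omega
        rw [e3, e4] at hr
        simp only [cont, e1, e2, hr, hGm]
        simp [hGm1]
      | (k+3) =>
        intro _ h2 x
        have ha1 : (fun j => (d (m - (k+3) + (j+1))).eval x)
            = (fun j => (d (m - (k+2) + j)).eval x) := by
          funext j
          have : m - (k+3) + (j+1) = m - (k+2) + j := by omega
          rw [this]
        have ha2 : (fun j => (d (m - (k+3) + (j+2))).eval x)
            = (fun j => (d (m - (k+1) + j)).eval x) := by
          funext j
          have : m - (k+3) + (j+2) = m - (k+1) + j := by omega
          rw [this]
        have hc : cont (k+3) (fun j => (d (m - (k+3) + j)).eval x)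
            = (d (m - (k+3) + 1)).eval x
              * cont (k+2) (fun j => (d (m - (k+2) + j)).eval x)
              - cont (k+1) (fun j => (d (m - (k+1) + j)).eval x) := by
          rw [show cont (k+3) (fun j => (d (m - (k+3) + j)).eval x)
            = (fun j => (d (m - (k+3) + j)).eval x) 1
              * cont (k+2) (fun j => (d (m - (k+3) + (j+1))).eval x)
              - cont (k+1) (fun j => (d (m - (k+3) + (j+2))).eval x) from rfl,
            ha1, ha2]
        rw [hc, ih (k+2) (by omega) (by omega) (by omega) x,
          ih (k+1) (by omega) (by omega) (by omega) x]
        have hr := hGrec (m - (k+2)) (by omega) (by omega)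
        have e1 : m - (k+2) - 1 = m - (k+3) := by omega
        have e2 : m - (k+2) + 1 = m - (k+1) := by omega
        have e3 : m - (k+3) + 1 = m - (k+2) := by omega
        rw [e1, e2] at hr
        rw [hr, e3]
        simp
  intro i hi1 hi2 x
  have hsub : ((sturmMatrix m d x).submatrix
          (fun k : Fin i => (⟨m - i + (k : ℕ), by have := k.isLt; omega⟩ : Fin m))
          (fun k : Fin i => (⟨m - i + (k : ℕ), by have := k.isLt; omega⟩ : Fin m)))
      = triM i (fun j => (d (m - i + j)).eval x) := by
    ext k l
    simp only [sturmMatrix, triM, submatrix_apply, of_apply]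
    split_ifs <;>
      first
      | rfl
      | omega
      | (exfalso; omega)
      | (congr 1; omega)
      | simp_all
  rw [hsub, det_triM, main i hi1 hi2 x]
end

section
/- For the Sturm matrix S_{f,g}(x) associated to non-constant real polynomials (f, g), the determinant det(S_{f,g}(x)) equals f(x)/f_m(x) (where f_m = gcd(f, g)), i.e., the full determinant equals the refined polynomial f̃₀. -/
open Polynomial Matrix

lemma coe_succAbove_one (k : ℕ) (j : Fin (k+1)) :
    (((1 : Fin (k+2)).succAbove j : Fin (k+2)) : ℕ) = if (j : ℕ) < 1 then (j:ℕ) else (j:ℕ)+1 := by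
  rcases lt_or_ge ((j:ℕ)) 1 with h | h
  · rw [Fin.succAbove_of_castSucc_lt]
    · simp [h]
    · simpa [Fin.lt_def] using h
  · rw [Fin.succAbove_of_le_castSucc]
    · simp [Nat.not_lt.mpr h]
    · simpa [Fin.le_def] using h

lemma sturm_det_rec (k : ℕ) (e : ℕ → Polynomial ℝ) (x : ℝ) :
    (sturmMatrix (k+2) e x).det
      = (e 1).eval x * (sturmMatrix (k+1) (fun i => e (i+1)) x).det
        - (sturmMatrix k (fun i => e (i+2)) x).det := by
  have hsub1 : (sturmMatrix (k+2) e x).submatrix Fin.succ ((0 : Fin (k+2)).succAbove)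
      = sturmMatrix (k+1) (fun i => e (i+1)) x := by
    ext i j
    simp only [submatrix_apply, Fin.zero_succAbove, sturmMatrix, of_apply, Fin.val_succ]
    split_ifs <;> first | rfl | omega
  set B := (sturmMatrix (k+2) e x).submatrix Fin.succ ((1 : Fin (k+2)).succAbove) with hB
  have hsub2 : B.submatrix ((0 : Fin (k+1)).succAbove) Fin.succ
      = sturmMatrix k (fun i => e (i+2)) x := by
    ext i j
    simp only [hB, submatrix_apply, Fin.zero_succAbove, sturmMatrix, of_apply, Fin.val_succ,
      coe_succAbove_one]
    split_ifs <;> first | rfl | omega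
  have hBdet : B.det = (sturmMatrix k (fun i => e (i+2)) x).det := by
    rw [det_succ_column_zero, Fin.sum_univ_succ]
    have h0 : B 0 0 = 1 := by
      simp [hB, sturmMatrix, coe_succAbove_one]
    have htail : ∀ i : Fin k, B i.succ 0 = 0 := by
      intro i
      simp [hB, sturmMatrix, coe_succAbove_one]
    simp only [htail, h0, hsub2, Fin.val_zero, pow_zero, one_mul, mul_zero, zero_mul,
      Finset.sum_const_zero, add_zero, mul_one]
  rw [det_succ_row_zero, Fin.sum_univ_succ, Fin.sum_univ_succ]
  have h00 : sturmMatrix (k+2) e x 0 0 = (e 1).eval x := by simp [sturmMatrix]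
  have h01 : sturmMatrix (k+2) e x 0 1 = 1 := by simp [sturmMatrix]
  have htail : ∀ j : Fin k, sturmMatrix (k+2) e x 0 j.succ.succ = 0 := by
    intro j; simp [sturmMatrix]
  rw [hsub1]
  simp only [htail, h00, h01, Fin.val_zero, Fin.val_succ, pow_zero, pow_succ, mul_zero, zero_mul,
    Finset.sum_const_zero, add_zero, one_mul, mul_one, pow_one, Fin.succ_zero_eq_one, Fin.val_one]
  rw [← hB, hBdet]
  ring

theorem stmt11 (f g : Polynomial ℝ)
    (hf : 0 < f.natDegree) (hg : 0 < g.natDegree)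
    (m : ℕ) (hm : 1 ≤ m)
    (F d : ℕ → Polynomial ℝ)
    (hF0 : F 0 = f) (hF1 : F 1 = g)
    (hrec : ∀ i, 1 ≤ i → i < m → F (i - 1) = d i * F i - F (i + 1))
    (hdeg : ∀ i, 1 ≤ i → i < m → (F (i + 1)).degree < (F i).degree)
    (hlast : F (m - 1) = d m * F m)
    (hFm : F m ≠ 0) :
    ∀ x : ℝ, Matrix.det (sturmMatrix m d x) = (f / F m).eval x := by
  intro x
  -- divisibility
  have hdvd : ∀ t, t ≤ m → F m ∣ F (m - t) := by
    intro t
    induction t using Nat.strong_induction_on with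
    | _ t ih =>
      match t with
      | 0 => intro _; simp
      | 1 => intro _; rw [hlast]; exact dvd_mul_left _ _
      | (t+2) =>
        intro ht
        have h1 : F (m - (t+2)) = d (m - (t+1)) * F (m - (t+1)) - F (m - t) := by
          have := hrec (m - (t+1)) (by omega) (by omega)
          have e1 : m - (t+1) - 1 = m - (t+2) := by omega
          have e2 : m - (t+1) + 1 = m - t := by omega
          rwa [e1, e2] at this
        rw [h1]
        exact dvd_sub (Dvd.dvd.mul_left (ih (t+1) (by omega) (by omega)) _)
          (ih t (by omega) (by omega))
  set G : ℕ → Polynomial ℝ := fun j => F j / F m with hGdef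
  have hG : ∀ t, t ≤ m → F m * G (m - t) = F (m - t) := fun t ht =>
    EuclideanDomain.mul_div_cancel' hFm (hdvd t ht)
  have key : ∀ k, k ≤ m →
      (sturmMatrix k (fun i => d (i + (m - k))) x).det = (G (m - k)).eval x := by
    intro k
    induction k using Nat.strong_induction_on with
    | _ k ih =>
      match k with
      | 0 =>
        intro _
        have : G m = 1 := by
          simp only [hGdef]; exact EuclideanDomain.div_self hFm
        simp [Matrix.det_fin_zero, Nat.sub_zero, this]
      | 1 =>
        intro _
        have hGm1 : G (m - 1) = d m := by
          apply mul_left_cancel₀ hFm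
          rw [hG 1 hm, hlast]; ring
        rw [Matrix.det_fin_one, hGm1]
        have : (0 : ℕ) + 1 + (m - 1) = m := by omega
        simp [sturmMatrix, this]
      | (k+2) =>
        intro hk
        rw [sturm_det_rec]
        have e1 : (fun i => d (i + 1 + (m - (k+2)))) = (fun i => d (i + (m - (k+1)))) := by
          funext i; congr 1; omega
        have e2 : (fun i => d (i + 2 + (m - (k+2)))) = (fun i => d (i + (m - k))) := by
          funext i; congr 1; omega
        have e3 : 1 + (m - (k+2)) = m - (k+1) := by omega
        rw [e3] at *
        have hrecG : G (m - (k+2)) = d (m - (k+1)) * G (m - (k+1)) - G (m - k) := by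
          apply mul_left_cancel₀ hFm
          rw [hG (k+2) hk, mul_sub, hG k (by omega)]
          have h1 : F (m - (k+2)) = d (m - (k+1)) * F (m - (k+1)) - F (m - k) := by
            have := hrec (m - (k+1)) (by omega) (by omega)
            have e1 : m - (k+1) - 1 = m - (k+2) := by omega
            have e2 : m - (k+1) + 1 = m - k := by omega
            rwa [e1, e2] at this
          rw [h1, ← hG (k+1) (by omega)]
          ring
        rw [show (fun i => d (i + 1 + (m - (k+2)))) = (fun i => d (i + (m - (k+1)))) from e1,
          e2, ih (k+1) (by omega) (by omega), ih k (by omega) (by omega), hrecG]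
        simp
  have := key m le_rfl
  simp only [Nat.sub_self] at this
  have hmat : (fun i => d (i + 0)) = d := by funext i; simp
  rw [hmat] at this
  rw [this, hGdef]; simp only [hF0]
end

section
/- (Sturm's Theorem) Let f be a non-constant real polynomial, a < b real numbers neither of which is a multiple root of f. Then the number of distinct real roots of f in (a, b] equals V_f(a) − V_f(b), where V_f(x) is the number of sign variations of the canonical Sturm chain f₀(x), …, f_m(x) evaluated at x, with zeros deleted before counting variations. -/
open Polynomial

/-- Number of sign changes in a list of reals (adjacent pairs of opposite sign). -/
noncomputable def signChanges : List ℝ → ℕ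
  | a :: b :: t => (if a * b < 0 then 1 else 0) + signChanges (b :: t)
  | _ => 0

/-- Number of sign variations of a real sequence: zeros are deleted first. -/
noncomputable def signVar (l : List ℝ) : ℕ :=
  signChanges (l.filter fun x => @decide (x ≠ 0) (Classical.propDecidable _))

/-
Dividing the chain by its last member `F m`, a greatest common divisor of `f` and `f'`, gives a
chain `G` with `G m = 1` satisfying the same recursion. Hence no two consecutive `G i` vanish
together, and the sign variations of `G` agree with those of `F` wherever `F m ≠ 0`. When `x`
crosses a point `c`, a zero of an inner `G i` sits between opposite signs of `G (i - 1)` and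
`G (i + 1)`, so it does not change the count. The roots of `G 0` are those of `f`, and `f f'`
goes from negative to positive through a root of `f`, so the count drops by exactly one there.
So `V(x)` plus the number of roots `≤ x` is locally constant on `ℝ`, hence constant.
-/

open Filter Topology Set

namespace Sturm

lemma signVar_singleton (x : ℝ) : signVar [x] = 0 := by
  by_cases hx : x = 0 <;> simp [signVar, hx, signChanges]

lemma signVar_zero_cons (l : List ℝ) : signVar (0 :: l) = signVar l := by
  simp [signVar]

lemma signVar_cons_zero_cons {x : ℝ} (hx : x ≠ 0) (l : List ℝ) :
    signVar (x :: 0 :: l) = signVar (x :: l) := by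
  simp [signVar, hx]

lemma signVar_cons_cons {x y : ℝ} (hx : x ≠ 0) (hy : y ≠ 0) (l : List ℝ) :
    signVar (x :: y :: l) = (if x * y < 0 then 1 else 0) + signVar (y :: l) := by
  simp [signVar, hx, hy, signChanges]

lemma signChanges_map_mul {c : ℝ} (hc : c ≠ 0) : ∀ l : List ℝ,
    signChanges (l.map (c * ·)) = signChanges l
  | [] | [_] => rfl
  | x :: y :: l => by
    have hsign : c * x * (c * y) < 0 ↔ x * y < 0 := by
      have hc2 : 0 < c * c := mul_self_pos.2 hc
      constructor <;> intro h <;> nlinarith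
    simp only [List.map_cons, signChanges, hsign, ← signChanges_map_mul hc (y :: l)]

lemma signVar_map_mul {c : ℝ} (hc : c ≠ 0) (l : List ℝ) :
    signVar (l.map (c * ·)) = signVar l := by
  unfold signVar
  rw [List.filter_map, signChanges_map_mul hc]
  congr 2
  funext x
  simp [hc]

lemma ofFn_val_succ (u : ℕ → ℝ) (n : ℕ) :
    (List.ofFn fun i : Fin (n + 1) => u i) = u 0 :: List.ofFn fun i : Fin n => u (i + 1) := by
  simp [List.ofFn_succ]

def IsNonzeroPerturbation (n : ℕ) (u v : ℕ → ℝ) : Prop :=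
  ∀ i ≤ n, v i ≠ 0 ∧ (u i ≠ 0 → 0 < u i * v i)

def ZerosFlanked (n : ℕ) (u : ℕ → ℝ) : Prop :=
  ∀ i, 1 ≤ i → i ≤ n → u i = 0 → i < n ∧ u (i - 1) * u (i + 1) < 0

section Perturbation

variable {n : ℕ} {u v : ℕ → ℝ}

lemma IsNonzeroPerturbation.tail (h : IsNonzeroPerturbation (n + 1) u v) :
    IsNonzeroPerturbation n (fun j => u (j + 1)) (fun j => v (j + 1)) :=
  fun i hi => h (i + 1) (by omega)

lemma ZerosFlanked.tail (h : ZerosFlanked (n + 1) u) : ZerosFlanked n (fun j => u (j + 1)) := by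
  intro i hi1 hin hi
  obtain ⟨hlt, hneg⟩ := h (i + 1) (by omega) (by omega) hi
  exact ⟨by omega, by rwa [show i + 1 - 1 = i - 1 + 1 by omega] at hneg⟩

lemma ZerosFlanked.one_ne_zero (h : ZerosFlanked n u) (hn : 1 ≤ n) (hu0 : u 0 = 0) : u 1 ≠ 0 :=
  fun hu1 => by simpa [hu0] using (h 1 le_rfl hn hu1).2

lemma mul_neg_iff_of_mul_pos {a a' b b' : ℝ} (ha : 0 < a * a') (hb : 0 < b * b') :
    a * b < 0 ↔ a' * b' < 0 := by
  constructor <;> intro h <;> nlinarith [mul_pos ha hb]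

lemma signChange_add_signChange {x y z : ℝ} (hxz : x * z < 0) (hy : y ≠ 0) :
    ((if x * y < 0 then 1 else 0) + (if y * z < 0 then 1 else 0) : ℕ) = 1 := by
  have hy2 : 0 < y * y := mul_self_pos.2 hy
  split_ifs <;> nlinarith

theorem signVar_ofFn_eq_of_perturbation (hu0 : u 0 ≠ 0) (hp : IsNonzeroPerturbation n u v)
    (hz : ZerosFlanked n u) :
    signVar (List.ofFn fun i : Fin (n + 1) => u i) =
      signVar (List.ofFn fun i : Fin (n + 1) => v i) := by
  induction n using Nat.strong_induction_on generalizing u v with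
  | _ n ih =>
  rcases n with _ | n
  · simp [signVar_singleton]
  have hv0 := (hp 0 (by omega)).1
  have hv1 := (hp 1 (by omega)).1
  rw [ofFn_val_succ u, ofFn_val_succ v, ofFn_val_succ (fun j => u (j + 1)),
    ofFn_val_succ (fun j => v (j + 1)), zero_add, signVar_cons_cons hv0 hv1]
  by_cases hu1 : u 1 = 0
  · obtain ⟨hn, hu02⟩ := hz 1 le_rfl (by omega) hu1
    obtain ⟨n, rfl⟩ : ∃ k, n = k + 1 := ⟨n - 1, by omega⟩
    have hu2 : u 2 ≠ 0 := fun h => by simp [h] at hu02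
    have hv2 := (hp 2 (by omega)).1
    -- `v 0, v 1, v 2` has exactly one sign change, like `u 0, u 2`, whatever the sign of `v 1`
    have hv02 : v 0 * v 2 < 0 := by nlinarith [(hp 0 (by omega)).2 hu0, (hp 2 (by omega)).2 hu2]
    have htail := ih n (by omega) hu2 hp.tail.tail hz.tail.tail
    rw [ofFn_val_succ (fun j => u (j + 1 + 1)), ofFn_val_succ (fun j => v (j + 1 + 1)),
      zero_add] at htail ⊢
    rw [hu1, signVar_cons_zero_cons hu0, signVar_cons_cons hu0 hu2,
      signVar_cons_cons hv1 hv2, htail, if_pos hu02, ← add_assoc,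
      signChange_add_signChange hv02 hv1]
  · have htail := ih n (by omega) hu1 hp.tail hz.tail
    rw [ofFn_val_succ (fun j => u (j + 1)), ofFn_val_succ (fun j => v (j + 1)), zero_add] at htail
    rw [signVar_cons_cons hu0 hu1, htail]
    simp only [mul_neg_iff_of_mul_pos ((hp 0 (by omega)).2 hu0) ((hp 1 (by omega)).2 hu1)]

theorem signVar_ofFn_eq_add (hn : 1 ≤ n) (hp : IsNonzeroPerturbation n u v)
    (hz : ZerosFlanked n u) :
    signVar (List.ofFn fun i : Fin (n + 1) => v i) =
      signVar (List.ofFn fun i : Fin (n + 1) => u i) +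
        if u 0 = 0 ∧ v 0 * v 1 < 0 then 1 else 0 := by
  by_cases hu0 : u 0 = 0
  · obtain ⟨k, rfl⟩ : ∃ k, n = k + 1 := ⟨n - 1, by omega⟩
    have htail := signVar_ofFn_eq_of_perturbation (hz.one_ne_zero hn hu0) hp.tail hz.tail
    rw [ofFn_val_succ u, ofFn_val_succ v, hu0, signVar_zero_cons, htail,
      ofFn_val_succ (fun j => v (j + 1)), signVar_cons_cons (hp 0 le_add_self).1 (hp 1 hn).1]
    simp [add_comm]
  · rw [signVar_ofFn_eq_of_perturbation hu0 hp hz, if_neg fun h => hu0 h.1, add_zero]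

end Perturbation

noncomputable def sturmVar (m : ℕ) (F : ℕ → ℝ[X]) (x : ℝ) : ℕ :=
  signVar (List.ofFn fun i : Fin (m + 1) => (F i).eval x)

lemma sturmVar_eq_of_eq_mul {m : ℕ} {F G : ℕ → ℝ[X]} {q : ℝ[X]}
    (hFG : ∀ i ≤ m, F i = q * G i) {x : ℝ} (hq : q.eval x ≠ 0) :
    sturmVar m F x = sturmVar m G x := by
  have hlist : (List.ofFn fun i : Fin (m + 1) => (F i).eval x) =
      (List.ofFn fun i : Fin (m + 1) => (G i).eval x).map (q.eval x * ·) := by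
    simp [List.map_ofFn, Function.comp_def, hFG _ (Nat.lt_succ_iff.1 (Fin.is_lt _))]
  rw [sturmVar, sturmVar, hlist, signVar_map_mul hq]

lemma eventually_inter_Iic_eq_of_gt {Z : Set ℝ} (hZ : Z.Finite) (c : ℝ) :
    ∀ᶠ x in 𝓝[>] c, Z ∩ Iic x = Z ∩ Iic c := by
  have hbelow : ∀ᶠ x in 𝓝[>] c, ∀ z ∈ Z, c < z → x < z :=
    hZ.eventually_all.2 fun z _ =>
      if hcz : c < z then
        eventually_nhdsWithin_of_eventually_nhds ((eventually_lt_nhds hcz).mono fun _ h _ => h)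
      else Eventually.of_forall fun _ h => absurd h hcz
  filter_upwards [hbelow, self_mem_nhdsWithin] with x hx hcx
  ext z
  simp only [mem_inter_iff, mem_Iic, and_congr_right_iff]
  intro hz
  exact ⟨fun hzx => not_lt.1 fun hcz => (hx z hz hcz).not_ge hzx, fun hzc => hzc.trans hcx.le⟩

lemma eventually_inter_Iic_eq_of_lt {Z : Set ℝ} (hZ : Z.Finite) (c : ℝ) :
    ∀ᶠ x in 𝓝[<] c, Z ∩ Iic x = Z ∩ Iio c := by
  have habove : ∀ᶠ x in 𝓝[<] c, ∀ z ∈ Z, z < c → z < x :=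
    hZ.eventually_all.2 fun z _ =>
      if hzc : z < c then
        eventually_nhdsWithin_of_eventually_nhds ((eventually_gt_nhds hzc).mono fun _ h _ => h)
      else Eventually.of_forall fun _ h => absurd h hzc
  filter_upwards [habove, self_mem_nhdsWithin] with x hx hxc
  ext z
  simp only [mem_inter_iff, mem_Iic, mem_Iio, and_congr_right_iff]
  intro hz
  exact ⟨fun hzx => hzx.trans_lt hxc, fun hzc => (hx z hz hzc).le⟩

lemma ncard_inter_Iic {Z : Set ℝ} (hZ : Z.Finite) (c : ℝ) [Decidable (c ∈ Z)] :
    (Z ∩ Iic c).ncard = (Z ∩ Iio c).ncard + if c ∈ Z then 1 else 0 := by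
  rw [← Iio_insert]
  split_ifs with hc
  · rw [inter_insert_of_mem hc, ncard_insert_of_notMem (by simp) (hZ.subset inter_subset_left)]
  · rw [inter_insert_of_notMem hc, add_zero]

theorem eq_add_ncard_of_jumps {V : ℝ → ℕ} {Z : Set ℝ} [DecidablePred (· ∈ Z)]
    (hZ : Z.Finite)
    (hright : ∀ c, ∀ᶠ x in 𝓝[>] c, V x = V c)
    (hleft : ∀ c, ∀ᶠ x in 𝓝[<] c, V x = V c + if c ∈ Z then 1 else 0)
    {a b : ℝ} (hab : a ≤ b) : V a = V b + (Z ∩ Ioc a b).ncard := by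
  set W : ℝ → ℕ := fun x => V x + (Z ∩ Iic x).ncard
  have hW : IsLocallyConstant W := by
    refine (IsLocallyConstant.iff_eventually_eq W).2 fun c => ?_
    rw [← nhdsNE_sup_pure c, ← nhdsLT_sup_nhdsGT c, eventually_sup, eventually_sup]
    refine ⟨⟨?_, ?_⟩, rfl⟩
    · filter_upwards [hleft c, eventually_inter_Iic_eq_of_lt hZ c] with x hV hZx
      simp only [W, hV, hZx, ncard_inter_Iic hZ c]
      ring
    · filter_upwards [hright c, eventually_inter_Iic_eq_of_gt hZ c] with x hV hZx
      simp only [W, hV, hZx]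
  have hsplit : Z ∩ Iic b = (Z ∩ Iic a) ∪ (Z ∩ Ioc a b) := by
    rw [← inter_union_distrib_left, Iic_union_Ioc_eq_Iic hab]
  have hcount : (Z ∩ Iic b).ncard = (Z ∩ Iic a).ncard + (Z ∩ Ioc a b).ncard := by
    rw [hsplit, ncard_union_eq
      ((Iic_disjoint_Ioc le_rfl).mono inter_subset_right inter_subset_right)
      (hZ.subset inter_subset_left) (hZ.subset inter_subset_left)]
  have := hW.apply_eq_of_preconnectedSpace a b
  simp only [W, hcount] at this
  omega

lemma eventually_eval_ne_zero {p : ℝ[X]} (hp : p ≠ 0) (c : ℝ) :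
    ∀ᶠ x in 𝓝[≠] c, p.eval x ≠ 0 := by
  have hS : ({x | p.IsRoot x} \ {c})ᶜ ∈ 𝓝 c :=
    (p.finite_setOfPred_isRoot hp).sdiff.isClosed.compl_mem_nhds (by simp)
  filter_upwards [nhdsWithin_le_nhds hS, self_mem_nhdsWithin] with x hx hxc hroot
  exact hx ⟨hroot, hxc⟩

lemma eventually_mul_eval_pos {p : ℝ[X]} {c : ℝ} (hc : p.eval c ≠ 0) :
    ∀ᶠ x in 𝓝 c, 0 < p.eval c * p.eval x :=
  ((continuous_const.mul p.continuous).tendsto c).eventually (lt_mem_nhds (mul_self_pos.2 hc))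

lemma exists_eval_mul_derivative_eq {f : ℝ[X]} (hf : f ≠ 0) {c : ℝ} (hc : f.IsRoot c) :
    ∃ (k : ℕ) (H : ℝ[X]), 0 < H.eval c ∧
      ∀ x, f.eval x * (derivative f).eval x = (x - c) ^ (2 * k + 1) * H.eval x := by
  obtain ⟨g, hfg, hg⟩ := f.exists_eq_pow_rootMultiplicity_mul_and_not_dvd hf c
  obtain ⟨k, hk⟩ := Nat.exists_eq_add_one.2 ((rootMultiplicity_pos hf).2 hc)
  rw [hk] at hfg
  have hgc : g.eval c ≠ 0 := fun h => hg (dvd_iff_isRoot.2 h)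
  -- `f = (X - c) ^ (k + 1) * g` and `f' = (X - c) ^ k * ((k + 1) * g + (X - c) * g')`
  refine ⟨k, g * (C ((k : ℝ) + 1) * g + (X - C c) * derivative g), ?_, fun x => ?_⟩
  · simp only [eval_mul, eval_add, eval_C, eval_sub, eval_X, sub_self, zero_mul, add_zero]
    rw [mul_left_comm, ← sq]
    positivity
  · rw [hfg]
    simp only [derivative_mul, derivative_pow, derivative_sub, derivative_X, derivative_C,
      eval_mul, eval_add, eval_pow, eval_sub, eval_X, eval_C, eval_one, eval_zero]
    push_cast
    ring

lemma eventually_pos_eval_mul_derivative_nhdsGT {f : ℝ[X]} (hf : f ≠ 0) {c : ℝ}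
    (hc : f.IsRoot c) :
    ∀ᶠ x in 𝓝[>] c, 0 < f.eval x * (derivative f).eval x := by
  obtain ⟨k, H, hH, hfH⟩ := exists_eval_mul_derivative_eq hf hc
  filter_upwards [nhdsWithin_le_nhds ((H.continuous.tendsto c).eventually (lt_mem_nhds hH)),
    self_mem_nhdsWithin] with x hHx hcx
  rw [hfH]
  exact mul_pos (pow_pos (sub_pos.2 hcx) _) hHx

lemma eventually_neg_eval_mul_derivative_nhdsLT {f : ℝ[X]} (hf : f ≠ 0) {c : ℝ}
    (hc : f.IsRoot c) :
    ∀ᶠ x in 𝓝[<] c, f.eval x * (derivative f).eval x < 0 := by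
  obtain ⟨k, H, hH, hfH⟩ := exists_eval_mul_derivative_eq hf hc
  filter_upwards [nhdsWithin_le_nhds ((H.continuous.tendsto c).eventually (lt_mem_nhds hH)),
    self_mem_nhdsWithin] with x hHx hxc
  rw [hfH]
  exact mul_neg_of_neg_of_pos ((odd_two_mul_add_one k).pow_neg (sub_neg.2 hxc)) hHx

lemma isRoot_of_eq_mul_of_dvd_derivative {R : Type*} [CommRing R] [IsDomain R] [CharZero R]
    {f q g : R[X]} (hf : f ≠ 0) (hfg : f = q * g) (hq : q ∣ derivative f) {c : R}
    (hc : f.IsRoot c) : g.IsRoot c := by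
  have hf' : derivative f ≠ 0 := fun h => hf <| by
    rw [eq_C_of_derivative_eq_zero h] at hc ⊢
    simpa using hc
  have hmul : f.rootMultiplicity c = q.rootMultiplicity c + g.rootMultiplicity c := by
    rw [hfg]; exact rootMultiplicity_mul (hfg ▸ hf)
  have hle := rootMultiplicity_le_rootMultiplicity_of_dvd hf' hq c
  rw [derivative_rootMultiplicity_of_root hc] at hle
  have hpos := (rootMultiplicity_pos hf).2 hc
  exact (rootMultiplicity_pos (right_ne_zero_of_mul (hfg ▸ hf))).1 (by omega)

lemma eventually_sign_of_eq_mul {f q g₀ g₁ : ℝ[X]} (hf : f ≠ 0) (h₀ : f = q * g₀)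
    (h₁ : derivative f = q * g₁) {c : ℝ} (hc : g₀.IsRoot c) :
    (∀ᶠ x in 𝓝[>] c, 0 < g₀.eval x * g₁.eval x) ∧
      ∀ᶠ x in 𝓝[<] c, g₀.eval x * g₁.eval x < 0 := by
  have hfc : f.IsRoot c := by simp [h₀, hc.eq_zero]
  have hprod : ∀ x, f.eval x * (derivative f).eval x =
      q.eval x ^ 2 * (g₀.eval x * g₁.eval x) := by
    intro x
    rw [h₁, h₀]
    simp only [eval_mul]
    ring
  constructor
  · filter_upwards [eventually_pos_eval_mul_derivative_nhdsGT hf hfc] with x hx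
    exact pos_of_mul_pos_right (hprod x ▸ hx) (sq_nonneg _)
  · filter_upwards [eventually_neg_eval_mul_derivative_nhdsLT hf hfc] with x hx
    exact neg_of_mul_neg_right (hprod x ▸ hx) (sq_nonneg _)

def IsChainRecurrence {R : Type*} [CommRing R] (m : ℕ) (F d : ℕ → R[X]) : Prop :=
  ∀ i, 1 ≤ i → i < m → F (i - 1) = d i * F i - F (i + 1)

section Chain

variable {m : ℕ}

lemma chain_ne_zero {R : Type*} [CommRing R] {F : ℕ → R[X]}
    (hdeg : ∀ i, 1 ≤ i → i < m → (F (i + 1)).degree < (F i).degree) (h0 : F 0 ≠ 0)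
    (hm : F m ≠ 0) {i : ℕ} (hi : i ≤ m) : F i ≠ 0 := by
  rcases i.eq_zero_or_pos with rfl | hi0
  · exact h0
  rcases hi.lt_or_eq with hlt | rfl
  · exact ne_zero_of_degree_gt (hdeg i hi0 hlt)
  · exact hm

lemma dvd_of_chain {R : Type*} [CommRing R] {F d : ℕ → R[X]} (hrec : IsChainRecurrence m F d)
    (hlast : F (m - 1) = d m * F m) {i : ℕ} (hi : i ≤ m) : F m ∣ F i := by
  rcases m with _ | n
  · obtain rfl : i = 0 := by omega
    exact dvd_rfl
  suffices h : ∀ j ≤ n, F (n + 1) ∣ F j ∧ F (n + 1) ∣ F (j + 1) by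
    rcases hi.eq_or_lt with rfl | hlt
    · exact dvd_rfl
    · exact (h i (by omega)).1
  intro j hj
  induction hj using Nat.decreasingInduction with
  | self => exact ⟨hlast ▸ dvd_mul_left _ _, dvd_rfl⟩
  | of_succ k hk ih =>
    refine ⟨?_, ih.1⟩
    rw [show k = k + 1 - 1 from rfl, hrec (k + 1) (by omega) (by omega)]
    exact dvd_sub (ih.1.mul_left _) ih.2

lemma exists_chain_quotient {K : Type*} [Field K] {F d : ℕ → K[X]}
    (hrec : IsChainRecurrence m F d) (hlast : F (m - 1) = d m * F m) (hFm : F m ≠ 0) :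
    ∃ G : ℕ → K[X], (∀ i ≤ m, F i = F m * G i) ∧ G m = 1 ∧
      IsChainRecurrence m G d := by
  have hFG : ∀ i ≤ m, F i = F m * (F i / F m) := fun i hi =>
    (EuclideanDomain.mul_div_cancel' hFm (dvd_of_chain hrec hlast hi)).symm
  refine ⟨fun i => F i / F m, hFG, EuclideanDomain.div_self hFm, fun i h1 h2 => ?_⟩
  apply mul_left_cancel₀ hFm
  rw [← hFG _ (by omega), mul_sub, ← mul_left_comm, ← hFG _ (by omega), ← hFG _ (by omega)]
  exact hrec i h1 h2

lemma eval_succ_ne_zero_of_eval_eq_zero {R : Type*} [CommRing R] {F d : ℕ → R[X]}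
    (hrec : IsChainRecurrence m F d) {c : R} (hc : (F m).eval c ≠ 0) {i : ℕ} (hi : i < m)
    (h : (F i).eval c = 0) : (F (i + 1)).eval c ≠ 0 := by
  obtain ⟨n, rfl⟩ : ∃ n, m = n + 1 := ⟨m - 1, by omega⟩
  induction Nat.le_of_lt_succ hi using Nat.decreasingInduction with
  | self => exact hc
  | of_succ k hk ih =>
    intro h1
    have hrec' := congrArg (eval c) (hrec (k + 1) (by omega) (by omega))
    simp only [Nat.add_sub_cancel, eval_sub, eval_mul, h, h1, mul_zero, zero_sub,
      zero_eq_neg] at hrec'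
    exact ih h1 (by omega) hrec'

lemma zerosFlanked_eval {F d : ℕ → ℝ[X]} (hrec : IsChainRecurrence m F d) {c : ℝ}
    (hc : (F m).eval c ≠ 0) : ZerosFlanked m fun i => (F i).eval c := by
  intro i hi1 him hi
  have hlt : i < m := him.lt_of_ne fun h => hc (h ▸ hi)
  have hnext := eval_succ_ne_zero_of_eval_eq_zero hrec hc hlt hi
  have hprev : (F (i - 1)).eval c = -(F (i + 1)).eval c := by
    simp [hrec i hi1 hlt, hi]
  refine ⟨hlt, ?_⟩
  dsimp only
  rw [hprev, neg_mul]
  exact neg_neg_of_pos (mul_self_pos.2 hnext)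

theorem eventually_sturmVar_eq {G d : ℕ → ℝ[X]} (hm : 1 ≤ m)
    (hrec : IsChainRecurrence m G d) (hG : ∀ i ≤ m, G i ≠ 0) {c : ℝ}
    (hc : (G m).eval c ≠ 0) :
    ∀ᶠ x in 𝓝[≠] c, sturmVar m G x =
      sturmVar m G c + if (G 0).eval c = 0 ∧ (G 0).eval x * (G 1).eval x < 0 then 1 else 0 := by
  have hne : ∀ᶠ x in 𝓝[≠] c, ∀ i ∈ Iic m, (G i).eval x ≠ 0 :=
    (finite_Iic m).eventually_all.2 fun i hi => eventually_eval_ne_zero (hG i hi) c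
  have hsign : ∀ᶠ x in 𝓝 c, ∀ i ∈ Iic m,
      (G i).eval c ≠ 0 → 0 < (G i).eval c * (G i).eval x :=
    (finite_Iic m).eventually_all.2 fun i _ =>
      if h : (G i).eval c = 0 then Eventually.of_forall fun _ h' => absurd h h'
      else (eventually_mul_eval_pos h).mono fun _ hx _ => hx
  filter_upwards [hne, nhdsWithin_le_nhds hsign] with x hx hx'
  exact signVar_ofFn_eq_add hm (fun i hi => ⟨hx i hi, hx' i hi⟩) (zerosFlanked_eval hrec hc)

theorem sturmVar_eq_add_ncard {G d : ℕ → ℝ[X]} (hm : 1 ≤ m)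
    (hrec : IsChainRecurrence m G d) (hG : ∀ i ≤ m, G i ≠ 0) (hGm : ∀ x, (G m).eval x ≠ 0)
    (hsign : ∀ c, (G 0).eval c = 0 →
      (∀ᶠ x in 𝓝[>] c, 0 < (G 0).eval x * (G 1).eval x) ∧
        ∀ᶠ x in 𝓝[<] c, (G 0).eval x * (G 1).eval x < 0)
    {a b : ℝ} (hab : a ≤ b) :
    sturmVar m G a = sturmVar m G b + ({x | (G 0).eval x = 0} ∩ Ioc a b).ncard := by
  refine eq_add_ncard_of_jumps (finite_setOfPred_isRoot (hG 0 m.zero_le)) (fun c => ?_)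
    (fun c => ?_) hab
  all_goals
    have hV := eventually_sturmVar_eq hm hrec hG (hGm c)
    by_cases h0 : (G 0).eval c = 0
  · filter_upwards [nhdsGT_le_nhdsNE c hV, (hsign c h0).1] with x hx hpos
    simp [hx, hpos.not_gt]
  · filter_upwards [nhdsGT_le_nhdsNE c hV] with x hx
    simp [hx, h0]
  · filter_upwards [nhdsLT_le_nhdsNE c hV, (hsign c h0).2] with x hx hneg
    simp [hx, h0, hneg]
  · filter_upwards [nhdsLT_le_nhdsNE c hV] with x hx
    simp [hx, h0]

end Chain

end Sturm

open Sturm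

/-- **Sturm's Theorem.** -/
theorem stmt19 (f : Polynomial ℝ) (hf : 0 < f.natDegree)
    -- the canonical Sturm chain of f:
    (m : ℕ) (hm : 1 ≤ m)
    (F d : ℕ → Polynomial ℝ)
    (hF0 : F 0 = f) (hF1 : F 1 = derivative f)
    (hrec : ∀ i, 1 ≤ i → i < m → F (i - 1) = d i * F i - F (i + 1))
    (hdeg : ∀ i, 1 ≤ i → i < m → (F (i + 1)).degree < (F i).degree)
    (hlast : F (m - 1) = d m * F m)
    (hFm : F m ≠ 0)
    -- a < b, neither being a multiple root of f:
    (a b : ℝ) (hab : a < b)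
    (ha : ¬(f.eval a = 0 ∧ (derivative f).eval a = 0))
    (hb : ¬(f.eval b = 0 ∧ (derivative f).eval b = 0)) :
    ((Set.ncard {x ∈ Set.Ioc a b | f.eval x = 0} : ℤ))
      = (signVar (List.ofFn fun i : Fin (m + 1) => (F (i : ℕ)).eval a) : ℤ)
        - (signVar (List.ofFn fun i : Fin (m + 1) => (F (i : ℕ)).eval b) : ℤ) := by
  have hf0 : f ≠ 0 := ne_zero_of_natDegree_gt hf
  have hF : ∀ i ≤ m, F i ≠ 0 := fun i => chain_ne_zero hdeg (hF0 ▸ hf0) hFm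
  obtain ⟨G, hFG, hGm, hGrec⟩ := exists_chain_quotient hrec hlast hFm
  have hfG : f = F m * G 0 := hF0 ▸ hFG 0 m.zero_le
  have hf'G : derivative f = F m * G 1 := hF1 ▸ hFG 1 hm
  have hroots : {x ∈ Set.Ioc a b | f.eval x = 0} = {x | (G 0).eval x = 0} ∩ Set.Ioc a b := by
    ext x
    have : f.eval x = 0 ↔ (G 0).eval x = 0 :=
      ⟨isRoot_of_eq_mul_of_dvd_derivative hf0 hfG (hf'G ▸ dvd_mul_right _ _),
        fun h => by simp [hfG, h]⟩
    simp [this, and_comm]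
  have hends : ∀ x, ¬(f.eval x = 0 ∧ (derivative f).eval x = 0) →
      sturmVar m F x = sturmVar m G x :=
    fun x hx => sturmVar_eq_of_eq_mul hFG fun h => hx ⟨by simp [hfG, h], by simp [hf'G, h]⟩
  have hsturm := sturmVar_eq_add_ncard hm hGrec
    (fun i hi h => hF i hi (by rw [hFG i hi, h, mul_zero])) (by simp [hGm])
    (fun c hc => eventually_sign_of_eq_mul hf0 hfG hf'G hc) hab.le
  change _ = (sturmVar m F a : ℤ) - sturmVar m F b
  rw [hends a ha, hends b hb, hsturm, hroots]
  push_cast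
  ring
end
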